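/- Let K be a field, α, λ ∈ K∖{0} and μ ∈ K. Suppose Q ∈ K[x,y,z] is homogeneous of degree 4, irreducible over the algebraic closure of K, and satisfies: (i) Q(x+α, y, 1) ∈ (x,y)³ in K[x,y]; (ii) Q(1,0,0) = 0 and the homogeneous degree-1 part of Q(1,y,z) ∈ K[y,z] is a nonzero scalar multiple of z; (iii) Q(0,y,z) = c·z⁴ for some c ∈ K∖{0}; (iv) y⁴ divides Q(x·y⁴, 1, y) in K[x,y] and the quotient h(x,y) = Q(x·y⁴, 1, y)/y⁴ satisfies h(λ,0) = 0; (v) y divides h(x·y+λ, y) in K[x,y] and the quotient h(x·y+λ, y)/y vanishes at (μ, 0). Then Q is a nonzero scalar multiple of G_α = λ²·z·(αz−x)³ + α²·x·y²·(μ·(αz−x) − α·λ·y). -/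

import Mathlib

/-!  Formalization of a statement from "Two kinds of examples of curves with
isomorphic complements" (J. Blanc).  `Gq K θ l m` is the homogeneous quartic
`G_θ = λ²·z·(θz−x)³ + θ²·x·y²·(μ·(θz−x) − θ·λ·y)` in `K[x,y,z]`, where the
variables `x, y, z` are `X 0, X 1, X 2` and `l = λ`, `m = μ`. -/

open MvPolynomial

noncomputable section

/-- The quartic `G_θ = λ²·z·(θz−x)³ + θ²·x·y²·(μ·(θz−x) − θ·λ·y)`. -/
def Gq (K : Type) [Field K] (t l m : K) : MvPolynomial (Fin 3) K :=
  C (l ^ 2) * X 2 * (C t * X 2 - X 0) ^ 3 +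
    C (t ^ 2) * X 0 * (X 1) ^ 2 * (C m * (C t * X 2 - X 0) - C (t * l) * X 1)

/-!
Conditions (i)–(iii) are linear in the fifteen coefficients of `Q` and force
`Q = A·z·(αz−x)³ + x·y²·(B·(αz−x) + D·y)` with `A ≠ 0`. For such a quartic
`Q(x·y⁴, 1, y) / y⁴ = A·(α − x·y³)³ + x·(B·y·(α − x·y³) + D)`, so (iv) reads `A·α³ + D·λ = 0`
and, one blow-up further, (v) reads `B·α·λ + D·μ = 0`. These two relations leave exactly the
multiples `(A/λ²)·G_α`.
-/

section

variable {K : Type*} [Field K]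

def monoExp₂ (i j : ℕ) : Fin 2 →₀ ℕ := Finsupp.single 0 i + Finsupp.single 1 j

def monoExp₃ (i j k : ℕ) : Fin 3 →₀ ℕ :=
  Finsupp.single 0 i + Finsupp.single 1 j + Finsupp.single 2 k

@[simp] lemma monoExp₂_inj {i j i' j' : ℕ} :
    monoExp₂ i j = monoExp₂ i' j' ↔ i = i' ∧ j = j' := by
  refine ⟨fun h => ⟨?_, ?_⟩, by rintro ⟨rfl, rfl⟩; rfl⟩
  · simpa [monoExp₂] using DFunLike.congr_fun h 0
  · simpa [monoExp₂] using DFunLike.congr_fun h 1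

@[simp] lemma monoExp₃_inj {i j k i' j' k' : ℕ} :
    monoExp₃ i j k = monoExp₃ i' j' k' ↔ i = i' ∧ j = j' ∧ k = k' := by
  refine ⟨fun h => ⟨?_, ?_, ?_⟩, by rintro ⟨rfl, rfl, rfl⟩; rfl⟩
  · simpa [monoExp₃] using DFunLike.congr_fun h 0
  · simpa [monoExp₃] using DFunLike.congr_fun h 1
  · simpa [monoExp₃] using DFunLike.congr_fun h 2

lemma eq_monoExp₃ (d : Fin 3 →₀ ℕ) : d = monoExp₃ (d 0) (d 1) (d 2) := by
  ext i; fin_cases i <;> simp [monoExp₃]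

lemma degree_monoExp₂ (i j : ℕ) : (monoExp₂ i j).degree = i + j := by
  simp [monoExp₂, Finsupp.degree_single]

lemma degree_monoExp₃ (i j k : ℕ) : (monoExp₃ i j k).degree = i + j + k := by
  simp [monoExp₃, Finsupp.degree_single]

lemma C_mul_X_pow_eq_monomial₂ (r : K) (i j : ℕ) :
    C r * X 0 ^ i * X 1 ^ j = monomial (monoExp₂ i j) r := by
  simp [monoExp₂, X_pow_eq_monomial, C_mul_monomial, monomial_mul]

lemma C_mul_X_pow_eq_monomial₃ (r : K) (i j k : ℕ) :
    C r * X 0 ^ i * X 1 ^ j * X 2 ^ k = monomial (monoExp₃ i j k) r := by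
  simp [monoExp₃, X_pow_eq_monomial, C_mul_monomial, monomial_mul]

lemma coeff_monoExp₂_C_mul_X_pow (r : K) (i j i' j' : ℕ) :
    coeff (monoExp₂ i j) (C r * X 0 ^ i' * X 1 ^ j') = if i' = i ∧ j' = j then r else 0 := by
  simp [C_mul_X_pow_eq_monomial₂, coeff_monomial]

lemma coeff_monoExp₃_C_mul_X_pow (r : K) (i j k i' j' k' : ℕ) :
    coeff (monoExp₃ i j k) (C r * X 0 ^ i' * X 1 ^ j' * X 2 ^ k') =
      if i' = i ∧ j' = j ∧ k' = k then r else 0 := by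
  simp [C_mul_X_pow_eq_monomial₃, coeff_monomial]

lemma span_X_zero_X_one_eq_idealOfVars :
    Ideal.span {(X 0 : MvPolynomial (Fin 2) K), X 1} = idealOfVars (Fin 2) K := by
  congr 1
  ext p
  simp [Fin.exists_fin_two, eq_comm]

/- Exponents `0` and `1` are written out in this and the expansions below, so that the
`coeff_monoExp*_C_mul_X_pow` lemmas apply to every term. -/
def ternaryQuartic (q : ℕ → ℕ → ℕ → K) : MvPolynomial (Fin 3) K :=
  C (q 4 0 0) * X 0 ^ 4 * X 1 ^ 0 * X 2 ^ 0 + C (q 3 1 0) * X 0 ^ 3 * X 1 ^ 1 * X 2 ^ 0 +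
  C (q 3 0 1) * X 0 ^ 3 * X 1 ^ 0 * X 2 ^ 1 + C (q 2 2 0) * X 0 ^ 2 * X 1 ^ 2 * X 2 ^ 0 +
  C (q 2 1 1) * X 0 ^ 2 * X 1 ^ 1 * X 2 ^ 1 + C (q 2 0 2) * X 0 ^ 2 * X 1 ^ 0 * X 2 ^ 2 +
  C (q 1 3 0) * X 0 ^ 1 * X 1 ^ 3 * X 2 ^ 0 + C (q 1 2 1) * X 0 ^ 1 * X 1 ^ 2 * X 2 ^ 1 +
  C (q 1 1 2) * X 0 ^ 1 * X 1 ^ 1 * X 2 ^ 2 + C (q 1 0 3) * X 0 ^ 1 * X 1 ^ 0 * X 2 ^ 3 +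
  C (q 0 4 0) * X 0 ^ 0 * X 1 ^ 4 * X 2 ^ 0 + C (q 0 3 1) * X 0 ^ 0 * X 1 ^ 3 * X 2 ^ 1 +
  C (q 0 2 2) * X 0 ^ 0 * X 1 ^ 2 * X 2 ^ 2 + C (q 0 1 3) * X 0 ^ 0 * X 1 ^ 1 * X 2 ^ 3 +
  C (q 0 0 4) * X 0 ^ 0 * X 1 ^ 0 * X 2 ^ 4

lemma MvPolynomial.IsHomogeneous.eq_ternaryQuartic {Q : MvPolynomial (Fin 3) K}
    (hQ : Q.IsHomogeneous 4) : Q = ternaryQuartic fun i j k => coeff (monoExp₃ i j k) Q := by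
  ext d
  rw [eq_monoExp₃ d]
  generalize d 0 = i, d 1 = j, d 2 = k
  simp only [ternaryQuartic, coeff_add, coeff_monoExp₃_C_mul_X_pow]
  by_cases h : i + j + k = 4
  · obtain rfl : k = 4 - i - j := by omega
    have hi : i ≤ 4 := by omega
    have hj : j ≤ 4 := by omega
    interval_cases i <;> interval_cases j <;> simp_all
  · rw [hQ.coeff_eq_zero (by rwa [degree_monoExp₃])]
    simp (disch := omega) only [if_neg, add_zero]

lemma aeval_zero_ternaryQuartic (q : ℕ → ℕ → ℕ → K) :
    aeval ![0, (X 0 : MvPolynomial (Fin 2) K), X 1] (ternaryQuartic q) =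
      C (q 0 4 0) * X 0 ^ 4 * X 1 ^ 0 + C (q 0 3 1) * X 0 ^ 3 * X 1 ^ 1 +
      C (q 0 2 2) * X 0 ^ 2 * X 1 ^ 2 + C (q 0 1 3) * X 0 ^ 1 * X 1 ^ 3 +
      C (q 0 0 4) * X 0 ^ 0 * X 1 ^ 4 := by
  simp [ternaryQuartic]

lemma aeval_one_ternaryQuartic (q : ℕ → ℕ → ℕ → K) :
    aeval ![1, (X 0 : MvPolynomial (Fin 2) K), X 1] (ternaryQuartic q) =
      C (q 4 0 0) * X 0 ^ 0 * X 1 ^ 0 + C (q 3 1 0) * X 0 ^ 1 * X 1 ^ 0 +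
      C (q 3 0 1) * X 0 ^ 0 * X 1 ^ 1 + C (q 2 2 0) * X 0 ^ 2 * X 1 ^ 0 +
      C (q 2 1 1) * X 0 ^ 1 * X 1 ^ 1 + C (q 2 0 2) * X 0 ^ 0 * X 1 ^ 2 +
      C (q 1 3 0) * X 0 ^ 3 * X 1 ^ 0 + C (q 1 2 1) * X 0 ^ 2 * X 1 ^ 1 +
      C (q 1 1 2) * X 0 ^ 1 * X 1 ^ 2 + C (q 1 0 3) * X 0 ^ 0 * X 1 ^ 3 +
      C (q 0 4 0) * X 0 ^ 4 * X 1 ^ 0 + C (q 0 3 1) * X 0 ^ 3 * X 1 ^ 1 +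
      C (q 0 2 2) * X 0 ^ 2 * X 1 ^ 2 + C (q 0 1 3) * X 0 ^ 1 * X 1 ^ 3 +
      C (q 0 0 4) * X 0 ^ 0 * X 1 ^ 4 := by
  simp [ternaryQuartic]

lemma aeval_shift_ternaryQuartic (q : ℕ → ℕ → ℕ → K) (a : K) :
    aeval ![(X 0 : MvPolynomial (Fin 2) K) + C a, X 1, 1] (ternaryQuartic q) =
      C (q 4 0 0 * a ^ 4 + q 3 0 1 * a ^ 3 + q 2 0 2 * a ^ 2 + q 1 0 3 * a + q 0 0 4) *
        X 0 ^ 0 * X 1 ^ 0 +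
      C (4 * q 4 0 0 * a ^ 3 + 3 * q 3 0 1 * a ^ 2 + 2 * q 2 0 2 * a + q 1 0 3) *
        X 0 ^ 1 * X 1 ^ 0 +
      C (q 3 1 0 * a ^ 3 + q 2 1 1 * a ^ 2 + q 1 1 2 * a + q 0 1 3) * X 0 ^ 0 * X 1 ^ 1 +
      C (6 * q 4 0 0 * a ^ 2 + 3 * q 3 0 1 * a + q 2 0 2) * X 0 ^ 2 * X 1 ^ 0 +
      C (3 * q 3 1 0 * a ^ 2 + 2 * q 2 1 1 * a + q 1 1 2) * X 0 ^ 1 * X 1 ^ 1 +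
      C (q 2 2 0 * a ^ 2 + q 1 2 1 * a + q 0 2 2) * X 0 ^ 0 * X 1 ^ 2 +
      C (4 * q 4 0 0 * a + q 3 0 1) * X 0 ^ 3 * X 1 ^ 0 +
      C (3 * q 3 1 0 * a + q 2 1 1) * X 0 ^ 2 * X 1 ^ 1 +
      C (2 * q 2 2 0 * a + q 1 2 1) * X 0 ^ 1 * X 1 ^ 2 +
      C (q 1 3 0 * a + q 0 3 1) * X 0 ^ 0 * X 1 ^ 3 +
      C (q 4 0 0) * X 0 ^ 4 * X 1 ^ 0 + C (q 3 1 0) * X 0 ^ 3 * X 1 ^ 1 +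
      C (q 2 2 0) * X 0 ^ 2 * X 1 ^ 2 + C (q 1 3 0) * X 0 ^ 1 * X 1 ^ 3 +
      C (q 0 4 0) * X 0 ^ 0 * X 1 ^ 4 := by
  simp only [ternaryQuartic, map_add, map_mul, map_pow, aeval_C, aeval_X, algebraMap_eq,
    map_ofNat, Matrix.cons_val_zero, Matrix.cons_val_one, Matrix.cons_val_two, Matrix.head_cons,
    Matrix.tail_cons]
  ring

lemma ternaryQuartic_coeffs_of_aeval_zero (q : ℕ → ℕ → ℕ → K) (c : K)
    (h : aeval ![(0 : MvPolynomial (Fin 2) K), X 0, X 1] (ternaryQuartic q) = C c * X 1 ^ 4) :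
    q 0 4 0 = 0 ∧ q 0 3 1 = 0 ∧ q 0 2 2 = 0 ∧ q 0 1 3 = 0 := by
  rw [aeval_zero_ternaryQuartic,
    show (C c * X 1 ^ 4 : MvPolynomial (Fin 2) K) = C c * X 0 ^ 0 * X 1 ^ 4 by ring] at h
  have hc (i j : ℕ) := congrArg (coeff (monoExp₂ i j)) h
  simp only [coeff_add, coeff_monoExp₂_C_mul_X_pow] at hc
  exact ⟨by simpa using hc 4 0, by simpa using hc 3 1, by simpa using hc 2 2,
    by simpa using hc 1 3⟩

lemma ternaryQuartic_coeffs_of_linearPart (q : ℕ → ℕ → ℕ → K) (t : K) (ht : t ≠ 0)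
    (h : homogeneousComponent 1 (aeval ![(1 : MvPolynomial (Fin 2) K), X 0, X 1]
      (ternaryQuartic q)) = C t * X 1) :
    q 3 1 0 = 0 ∧ q 3 0 1 ≠ 0 := by
  rw [aeval_one_ternaryQuartic,
    show (C t * X 1 : MvPolynomial (Fin 2) K) = C t * X 0 ^ 0 * X 1 ^ 1 by ring] at h
  have hc (i j : ℕ) (hij : i + j = 1) := congrArg (coeff (monoExp₂ i j)) h
  simp only [coeff_homogeneousComponent, degree_monoExp₂, coeff_add,
    coeff_monoExp₂_C_mul_X_pow] at hc
  have h301 : q 3 0 1 = t := by simpa using hc 0 1 rfl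
  exact ⟨by simpa using hc 1 0 rfl, h301 ▸ ht⟩

lemma ternaryQuartic_coeffs_of_triplePoint (q : ℕ → ℕ → ℕ → K) (a : K)
    (h : aeval ![(X 0 : MvPolynomial (Fin 2) K) + C a, X 1, 1] (ternaryQuartic q)
        ∈ idealOfVars (Fin 2) K ^ 3) :
    q 4 0 0 * a ^ 4 + q 3 0 1 * a ^ 3 + q 2 0 2 * a ^ 2 + q 1 0 3 * a + q 0 0 4 = 0 ∧
    4 * q 4 0 0 * a ^ 3 + 3 * q 3 0 1 * a ^ 2 + 2 * q 2 0 2 * a + q 1 0 3 = 0 ∧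
    q 3 1 0 * a ^ 3 + q 2 1 1 * a ^ 2 + q 1 1 2 * a + q 0 1 3 = 0 ∧
    6 * q 4 0 0 * a ^ 2 + 3 * q 3 0 1 * a + q 2 0 2 = 0 ∧
    3 * q 3 1 0 * a ^ 2 + 2 * q 2 1 1 * a + q 1 1 2 = 0 ∧
    q 2 2 0 * a ^ 2 + q 1 2 1 * a + q 0 2 2 = 0 := by
  rw [mem_pow_idealOfVars_iff', aeval_shift_ternaryQuartic] at h
  have hc (i j : ℕ) (hij : i + j < 3) := h (monoExp₂ i j) (by rwa [degree_monoExp₂])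
  simp only [coeff_add, coeff_monoExp₂_C_mul_X_pow] at hc
  exact ⟨by simpa using hc 0 0 (by norm_num), by simpa using hc 1 0 (by norm_num),
    by simpa using hc 0 1 (by norm_num), by simpa using hc 2 0 (by norm_num),
    by simpa using hc 1 1 (by norm_num), by simpa using hc 0 2 (by norm_num)⟩

/-- Every quartic satisfying (i)–(iii) has this form, with `A ≠ 0`. -/
def tripleQuartic (a A B D : K) : MvPolynomial (Fin 3) K :=
  C A * X 2 * (C a * X 2 - X 0) ^ 3 + X 0 * X 1 ^ 2 * (C B * (C a * X 2 - X 0) + C D * X 1)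

lemma exists_eq_tripleQuartic {a : K} (ha : a ≠ 0) {Q : MvPolynomial (Fin 3) K}
    (hQ : Q.IsHomogeneous 4)
    (h1 : aeval ![(X 0 : MvPolynomial (Fin 2) K) + C a, X 1, 1] Q
        ∈ (Ideal.span {(X 0 : MvPolynomial (Fin 2) K), X 1}) ^ 3)
    (h2 : eval ![1, 0, 0] Q = 0)
    (h2' : ∃ t : K, t ≠ 0 ∧
      homogeneousComponent 1 (aeval ![(1 : MvPolynomial (Fin 2) K), X 0, X 1] Q) = C t * X 1)
    (h3 : ∃ c : K, aeval ![(0 : MvPolynomial (Fin 2) K), X 0, X 1] Q = C c * (X 1) ^ 4) :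
    ∃ A B D : K, A ≠ 0 ∧ Q = tripleQuartic a A B D := by
  obtain ⟨q, rfl⟩ : ∃ q, Q = ternaryQuartic q := ⟨_, hQ.eq_ternaryQuartic⟩
  obtain ⟨t, ht, h2'⟩ := h2'
  obtain ⟨c, h3⟩ := h3
  rw [span_X_zero_X_one_eq_idealOfVars] at h1
  have h400 : q 4 0 0 = 0 := by simpa [ternaryQuartic] using h2
  obtain ⟨h310, h301⟩ := ternaryQuartic_coeffs_of_linearPart q t ht h2'
  obtain ⟨h040, h031, h022, h013⟩ := ternaryQuartic_coeffs_of_aeval_zero q c h3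
  obtain ⟨e00, e10, e01, e20, e11, e02⟩ := ternaryQuartic_coeffs_of_triplePoint q a h1
  -- (i): `Q(x,0,1)` vanishes to order 3 at `x = α`, its `y`-coefficient to order 2 and its
  -- `y²`-coefficient to order 1
  have h211 : q 2 1 1 = 0 := by
    have : q 2 1 1 * a ^ 2 = 0 := by
      linear_combination -e01 + a * e11 - 2 * a ^ 3 * h310 + h013
    simpa [ha] using this
  have h112 : q 1 1 2 = 0 := by linear_combination e11 - 3 * a ^ 2 * h310 - 2 * a * h211
  have h202 : q 2 0 2 = -(3 * a * q 3 0 1) := by linear_combination e20 - 6 * a ^ 2 * h400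
  have h103 : q 1 0 3 = 3 * a ^ 2 * q 3 0 1 := by
    linear_combination e10 - 4 * a ^ 3 * h400 - 2 * a * h202
  have h004 : q 0 0 4 = -(a ^ 3 * q 3 0 1) := by
    linear_combination e00 - a ^ 4 * h400 - a ^ 2 * h202 - a * h103
  have h121 : q 1 2 1 = -(a * q 2 2 0) := by
    have : (q 1 2 1 + a * q 2 2 0) * a = 0 := by linear_combination e02 - h022
    linear_combination (mul_eq_zero.1 this).resolve_right ha
  refine ⟨-q 3 0 1, -q 2 2 0, q 1 3 0, neg_ne_zero.2 h301, ?_⟩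
  rw [ternaryQuartic, tripleQuartic, h400, h310, h040, h031, h022, h013, h211, h112, h202, h103,
    h004, h121]
  simp only [map_neg, map_mul, map_pow, map_ofNat, map_zero]
  ring

lemma tripleQuartic_param_relations {a A B D l m : K}
    (h45 : ∃ h : MvPolynomial (Fin 2) K,
      aeval ![(X 0 : MvPolynomial (Fin 2) K) * (X 1) ^ 4, 1, X 1] (tripleQuartic a A B D)
        = (X 1) ^ 4 * h ∧
      eval ![l, 0] h = 0 ∧
      ∃ h₂ : MvPolynomial (Fin 2) K,
        aeval ![(X 0 : MvPolynomial (Fin 2) K) * X 1 + C l, X 1] h = X 1 * h₂ ∧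
        eval ![m, 0] h₂ = 0) :
    A * a ^ 3 + D * l = 0 ∧ B * a * l + D * m = 0 := by
  obtain ⟨h, hh, hl0, h₂, hh₂, hm0⟩ := h45
  have hX : (X 1 : MvPolynomial (Fin 2) K) ≠ 0 := X_ne_zero 1
  obtain rfl : h = C A * (C a - X 0 * X 1 ^ 3) ^ 3 +
      X 0 * (C B * X 1 * (C a - X 0 * X 1 ^ 3) + C D) := by
    refine mul_left_cancel₀ (pow_ne_zero 4 hX) (hh.symm.trans ?_)
    simp only [tripleQuartic, map_add, map_mul, map_sub, map_pow, aeval_C, aeval_X, algebraMap_eq,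
      Matrix.cons_val_zero, Matrix.cons_val_one, Matrix.cons_val_two, Matrix.head_cons,
      Matrix.tail_cons]
    ring
  have hq : A * a ^ 3 + D * l = 0 := by simpa [mul_comm l] using hl0
  set w : MvPolynomial (Fin 2) K := X 0 * X 1 + C l
  set u : MvPolynomial (Fin 2) K := w * X 1 ^ 3
  -- `h(x·y + λ, y) = A·α³ + D·λ + y·h₂`, from `(α - u)³ - α³ = -u·(3α² - 3α·u + u²)`
  obtain rfl : h₂ = -(C A * w * X 1 ^ 2 * (3 * C a ^ 2 - 3 * C a * u + u ^ 2)) +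
      w * C B * (C a - u) + C D * X 0 := by
    refine mul_left_cancel₀ hX (hh₂.symm.trans ?_)
    have hq' : C A * C a ^ 3 + C D * C l = (0 : MvPolynomial (Fin 2) K) := by
      simp only [← map_pow, ← map_mul, ← map_add, hq, map_zero]
    simp only [map_add, map_mul, map_sub, map_pow, aeval_C, aeval_X, algebraMap_eq,
      Matrix.cons_val_zero, Matrix.cons_val_one]
    linear_combination hq'
  exact ⟨hq, by simpa [w, u, mul_comm l, mul_right_comm B] using hm0⟩

end

lemma tripleQuartic_eq_C_mul_Gq {K : Type} [Field K] {a A B D l m : K} (ha : a ≠ 0)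
    (hl : l ≠ 0) (hq : A * a ^ 3 + D * l = 0) (hr : B * a * l + D * m = 0) :
    tripleQuartic a A B D = C (A / l ^ 2) * Gq K a l m := by
  have hA : A = A / l ^ 2 * l ^ 2 := by field_simp
  generalize A / l ^ 2 = c at hA ⊢
  subst hA
  have hD : D = -(c * a ^ 3 * l) := by
    apply mul_right_cancel₀ hl
    linear_combination hq
  have hB : B = c * a ^ 2 * m := by
    apply mul_right_cancel₀ (mul_ne_zero ha hl)
    linear_combination hr - m * hD
  rw [tripleQuartic, Gq, hB, hD]
  simp only [map_neg, map_mul, map_pow]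
  ring

theorem statement9 (K : Type) [Field K] (a l : K) (ha : a ≠ 0) (hl : l ≠ 0) (m : K)
    (Q : MvPolynomial (Fin 3) K)
    (hhom : Q.IsHomogeneous 4)
    -- (i) multiplicity ≥ 3 at (α:0:1)
    (h1 : aeval ![(X 0 : MvPolynomial (Fin 2) K) + C a, X 1, 1] Q
        ∈ (Ideal.span {(X 0 : MvPolynomial (Fin 2) K), X 1}) ^ 3)
    -- (ii) passes through (1:0:0), tangent to z = 0
    (h2 : eval ![1, 0, 0] Q = 0)
    (h2' : ∃ t : K, t ≠ 0 ∧
      homogeneousComponent 1 (aeval ![(1 : MvPolynomial (Fin 2) K), X 0, X 1] Q)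
        = C t * X 1)
    -- (iii) meets x = 0 only at (0:1:0)
    (h3 : ∃ c : K, c ≠ 0 ∧
      aeval ![(0 : MvPolynomial (Fin 2) K), X 0, X 1] Q = C c * (X 1) ^ 4)
    -- (iv) and (v): passage through q(λ) and r(λ,μ)
    (h45 : ∃ h : MvPolynomial (Fin 2) K,
      aeval ![(X 0 : MvPolynomial (Fin 2) K) * (X 1) ^ 4, 1, X 1] Q = (X 1) ^ 4 * h ∧
      eval ![l, 0] h = 0 ∧
      ∃ h₂ : MvPolynomial (Fin 2) K,
        aeval ![(X 0 : MvPolynomial (Fin 2) K) * X 1 + C l, X 1] h = X 1 * h₂ ∧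
        eval ![m, 0] h₂ = 0) :
    ∃ c : K, c ≠ 0 ∧ Q = C c * Gq K a l m := by
  obtain ⟨A, B, D, hA, rfl⟩ :=
    exists_eq_tripleQuartic ha hhom h1 h2 h2' (h3.imp fun _ => And.right)
  obtain ⟨hq, hr⟩ := tripleQuartic_param_relations h45
  exact ⟨A / l ^ 2, div_ne_zero hA (pow_ne_zero 2 hl), tripleQuartic_eq_C_mul_Gq ha hl hq hr⟩

end
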